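/- With θ = −(φ + p + |v|²/2)dt + v·dx and Ω_ν as above, the identity d(θ ∧ Ω_ν) = Ω_ν ∧ Ω_ν (which holds since Ω_ν = dθ) is equivalent to the helicity evolution equation ∂𝓗/∂t + ∇·(𝓗 v + (1/2)(p − |v|²/2) w) = (ν/2) v·∇²w − ν𝓗_w, where 𝓗 = (1/2) v·(∇×v). -/

import Mathlib

noncomputable section

/-- Points of `I × M ⊆ ℝ × ℝ³`, as `ℝ⁴` with coordinates `0,1,2` spatial and `3` time. -/
abbrev E4 := Fin 4 → ℝ

/-- Partial derivative `∂ₐ f` on `ℝ⁴` (`a = 3` is the time derivative). -/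
def pd4 (a : Fin 4) (f : E4 → ℝ) (x : E4) : ℝ := fderiv ℝ f x (Pi.single a 1)

/-- Cross product on `ℝ³`. -/
def cross3 (a b : Fin 3 → ℝ) : Fin 3 → ℝ :=
  ![a 1 * b 2 - a 2 * b 1, a 2 * b 0 - a 0 * b 2, a 0 * b 1 - a 1 * b 0]

/-- Dot product on `ℝ³`. -/
def dot3 (a b : Fin 3 → ℝ) : ℝ := ∑ i, a i * b i

/-- Spatial curl `∇ × v` of a time-dependent vector field. -/
def curl4 (v : E4 → Fin 3 → ℝ) (x : E4) : Fin 3 → ℝ :=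
  ![pd4 1 (fun y => v y 2) x - pd4 2 (fun y => v y 1) x,
    pd4 2 (fun y => v y 0) x - pd4 0 (fun y => v y 2) x,
    pd4 0 (fun y => v y 1) x - pd4 1 (fun y => v y 0) x]

/-- Spatial divergence `∇ · v`. -/
def div4 (v : E4 → Fin 3 → ℝ) (x : E4) : ℝ :=
  pd4 0 (fun y => v y 0) x + pd4 1 (fun y => v y 1) x + pd4 2 (fun y => v y 2) x

/-- Spatial gradient `∇ f`. -/
def grad4 (f : E4 → ℝ) (x : E4) : Fin 3 → ℝ := ![pd4 0 f x, pd4 1 f x, pd4 2 f x]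

/-- Componentwise spatial Laplacian `∇² v`. -/
def lap4 (v : E4 → Fin 3 → ℝ) (x : E4) (i : Fin 3) : ℝ :=
  pd4 0 (fun y => pd4 0 (fun z => v z i) y) x
    + pd4 1 (fun y => pd4 1 (fun z => v z i) y) x
    + pd4 2 (fun y => pd4 2 (fun z => v z i) y) x

/-- The spatial 1-form `∇φ + v×w − ν∇×w` (with `w = ∇×v`). -/
def aNu (ν : ℝ) (φ : E4 → ℝ) (v : E4 → Fin 3 → ℝ) (x : E4) (i : Fin 3) : ℝ :=
  grad4 φ x i + cross3 (v x) (curl4 v x) i - ν * curl4 (fun y => curl4 v y) x i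

/-- Coefficient matrix of the 2-form
`Ω_ν = −(∇φ + v×w − ν∇×w)·dx∧dt + w·(dx∧dx)` on `I × M`, with `w = ∇×v`:
`(Ω_ν)(e_a, e_b)` for the coordinate frame `(e₀,e₁,e₂,e₃) = (∂ₓ,∂_y,∂_z,∂_t)`. -/
def OmegaNu (ν : ℝ) (φ : E4 → ℝ) (v : E4 → Fin 3 → ℝ) (x : E4) : Fin 4 → Fin 4 → ℝ :=
  ![![0, curl4 v x 2, -(curl4 v x 1), -(aNu ν φ v x 0)],
    ![-(curl4 v x 2), 0, curl4 v x 0, -(aNu ν φ v x 1)],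
    ![curl4 v x 1, -(curl4 v x 0), 0, -(aNu ν φ v x 2)],
    ![aNu ν φ v x 0, aNu ν φ v x 1, aNu ν φ v x 2, 0]]

/-- Potential vorticity `q = w·∇φ`, `w = ∇×v`. -/
def pvort (φ : E4 → ℝ) (v : E4 → Fin 3 → ℝ) (x : E4) : ℝ :=
  dot3 (curl4 v x) (grad4 φ x)

/-- Vortical helicity `𝓗_w = (1/2) w·(∇×w)`, `w = ∇×v`. -/
def Hw (v : E4 → Fin 3 → ℝ) (x : E4) : ℝ :=
  (1 / 2) * dot3 (curl4 v x) (curl4 (fun y => curl4 v y) x)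

/-- Helicity density `𝓗 = (1/2) v·(∇×v)`. -/
def Hel (v : E4 → Fin 3 → ℝ) (x : E4) : ℝ := (1 / 2) * dot3 (v x) (curl4 v x)

/-- Coefficients of the canonical 1-form `θ = −(φ + p + |v|²/2) dt + v·dx`. -/
def thetaF (φ p : E4 → ℝ) (v : E4 → Fin 3 → ℝ) (x : E4) : Fin 4 → ℝ :=
  ![v x 0, v x 1, v x 2, -(φ x + p x + (1 / 2) * dot3 (v x) (v x))]

/-- The suspended velocity field `∂_t + v` on `I × M`. -/
def susp (v : E4 → Fin 3 → ℝ) (x : E4) : Fin 4 → ℝ := ![v x 0, v x 1, v x 2, 1]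

/-- Coefficients of the 3-form `θ ∧ Ω_ν`. -/
def thetaWedgeOmega (ν : ℝ) (φ p : E4 → ℝ) (v : E4 → Fin 3 → ℝ)
    (a b c : Fin 4) (x : E4) : ℝ :=
  thetaF φ p v x a * OmegaNu ν φ v x b c
    + thetaF φ p v x b * OmegaNu ν φ v x c a
    + thetaF φ p v x c * OmegaNu ν φ v x a b

/-! ### Auxiliary lemmas about `pd4` -/

@[fun_prop] lemma contDiff_pd4 {f : E4 → ℝ} (hf : ContDiff ℝ (⊤ : ℕ∞) f) (a : Fin 4) :
    ContDiff ℝ (⊤ : ℕ∞) (pd4 a f) := by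
  unfold pd4
  exact (hf.fderiv_right (by simp)).clm_apply contDiff_const

@[fun_prop] lemma differentiable_pd4 {f : E4 → ℝ} (hf : ContDiff ℝ (⊤ : ℕ∞) f) (a : Fin 4) :
    Differentiable ℝ (pd4 a f) := (contDiff_pd4 hf a).differentiable (by simp)

lemma pd4_add {f g : E4 → ℝ} {x : E4} (hf : DifferentiableAt ℝ f x)
    (hg : DifferentiableAt ℝ g x) (a : Fin 4) :
    pd4 a (fun y => f y + g y) x = pd4 a f x + pd4 a g x := by
  unfold pd4; rw [fderiv_fun_add hf hg]; rfl

lemma pd4_sub {f g : E4 → ℝ} {x : E4} (hf : DifferentiableAt ℝ f x)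
    (hg : DifferentiableAt ℝ g x) (a : Fin 4) :
    pd4 a (fun y => f y - g y) x = pd4 a f x - pd4 a g x := by
  unfold pd4; rw [fderiv_fun_sub hf hg]; rfl

lemma pd4_neg {f : E4 → ℝ} {x : E4} (a : Fin 4) :
    pd4 a (fun y => -f y) x = -pd4 a f x := by
  unfold pd4; rw [fderiv_fun_neg]; rfl

lemma pd4_mul {f g : E4 → ℝ} {x : E4} (hf : DifferentiableAt ℝ f x)
    (hg : DifferentiableAt ℝ g x) (a : Fin 4) :
    pd4 a (fun y => f y * g y) x = f x * pd4 a g x + g x * pd4 a f x := by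
  unfold pd4; rw [fderiv_fun_mul hf hg]; rfl

lemma pd4_const_mul {f : E4 → ℝ} {x : E4} (hf : DifferentiableAt ℝ f x) (c : ℝ) (a : Fin 4) :
    pd4 a (fun y => c * f y) x = c * pd4 a f x := by
  unfold pd4; rw [fderiv_const_mul hf]; rfl

lemma pd4_const {x : E4} (c : ℝ) (a : Fin 4) : pd4 a (fun _ => c) x = 0 := by
  unfold pd4; rw [fderiv_fun_const]; rfl

/-- Clairaut/Schwarz symmetry of second partial derivatives for smooth functions. -/
lemma pd4_comm {f : E4 → ℝ} (hf : ContDiff ℝ (⊤ : ℕ∞) f) (a b : Fin 4) (x : E4) :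
    pd4 a (fun y => pd4 b f y) x = pd4 b (fun y => pd4 a f y) x := by
  have hsym : IsSymmSndFDerivAt ℝ f x :=
    (hf.contDiffAt).isSymmSndFDerivAt (by norm_num; exact WithTop.coe_le_coe.mpr (le_top : (2 : ℕ∞) ≤ ⊤))
  have hd : DifferentiableAt ℝ (fderiv ℝ f) x :=
    ((hf.fderiv_right (m := (⊤ : ℕ∞)) (by simp)).differentiable (by simp)).differentiableAt
  have key : ∀ c d : Fin 4, pd4 c (fun y => pd4 d f y) x
      = fderiv ℝ (fderiv ℝ f) x (Pi.single c 1) (Pi.single d 1) := by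
    intro c d
    unfold pd4
    rw [show (fun y => fderiv ℝ f y (Pi.single d 1))
        = fun y => (fderiv ℝ f y : E4 →L[ℝ] ℝ) (Pi.single d 1) from rfl,
      fderiv_clm_apply hd (differentiableAt_const _)]
    simp
  rw [key a b, key b a, hsym]

lemma pd4_comm10 {f : E4 → ℝ} {x : E4} (hf : ContDiff ℝ (⊤ : ℕ∞) f) :
    pd4 1 (fun y => pd4 0 f y) x = pd4 0 (fun y => pd4 1 f y) x := pd4_comm hf 1 0 x
lemma pd4_comm20 {f : E4 → ℝ} {x : E4} (hf : ContDiff ℝ (⊤ : ℕ∞) f) :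
    pd4 2 (fun y => pd4 0 f y) x = pd4 0 (fun y => pd4 2 f y) x := pd4_comm hf 2 0 x
lemma pd4_comm21 {f : E4 → ℝ} {x : E4} (hf : ContDiff ℝ (⊤ : ℕ∞) f) :
    pd4 2 (fun y => pd4 1 f y) x = pd4 1 (fun y => pd4 2 f y) x := pd4_comm hf 2 1 x
lemma pd4_comm30 {f : E4 → ℝ} {x : E4} (hf : ContDiff ℝ (⊤ : ℕ∞) f) :
    pd4 3 (fun y => pd4 0 f y) x = pd4 0 (fun y => pd4 3 f y) x := pd4_comm hf 3 0 x
lemma pd4_comm31 {f : E4 → ℝ} {x : E4} (hf : ContDiff ℝ (⊤ : ℕ∞) f) :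
    pd4 3 (fun y => pd4 1 f y) x = pd4 1 (fun y => pd4 3 f y) x := pd4_comm hf 3 1 x
lemma pd4_comm32 {f : E4 → ℝ} {x : E4} (hf : ContDiff ℝ (⊤ : ℕ∞) f) :
    pd4 3 (fun y => pd4 2 f y) x = pd4 2 (fun y => pd4 3 f y) x := pd4_comm hf 3 2 x

lemma pd4_comm10' {f : E4 → ℝ} (hf : ContDiff ℝ (⊤ : ℕ∞) f) :
    pd4 1 (pd4 0 f) = pd4 0 (pd4 1 f) := funext fun x => pd4_comm hf 1 0 x
lemma pd4_comm20' {f : E4 → ℝ} (hf : ContDiff ℝ (⊤ : ℕ∞) f) :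
    pd4 2 (pd4 0 f) = pd4 0 (pd4 2 f) := funext fun x => pd4_comm hf 2 0 x
lemma pd4_comm21' {f : E4 → ℝ} (hf : ContDiff ℝ (⊤ : ℕ∞) f) :
    pd4 2 (pd4 1 f) = pd4 1 (pd4 2 f) := funext fun x => pd4_comm hf 2 1 x
lemma pd4_comm30' {f : E4 → ℝ} (hf : ContDiff ℝ (⊤ : ℕ∞) f) :
    pd4 3 (pd4 0 f) = pd4 0 (pd4 3 f) := funext fun x => pd4_comm hf 3 0 x
lemma pd4_comm31' {f : E4 → ℝ} (hf : ContDiff ℝ (⊤ : ℕ∞) f) :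
    pd4 3 (pd4 1 f) = pd4 1 (pd4 3 f) := funext fun x => pd4_comm hf 3 1 x
lemma pd4_comm32' {f : E4 → ℝ} (hf : ContDiff ℝ (⊤ : ℕ∞) f) :
    pd4 3 (pd4 2 f) = pd4 2 (pd4 3 f) := funext fun x => pd4_comm hf 3 2 x

set_option maxHeartbeats 4000000 in
/-- for a divergence-free solution `v` of the Navier–Stokes equation,
with `θ = −(φ + p + |v|²/2)dt + v·dx` and `Ω_ν` as above, the 4-form identity
`d(θ ∧ Ω_ν) = Ω_ν ∧ Ω_ν` (compared coefficientwise on `dx∧dy∧dz∧dt`) is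
equivalent to the helicity evolution equation
`∂𝓗/∂t + ∇·(𝓗v + (1/2)(p − |v|²/2)w) = (ν/2) v·∇²w − ν𝓗_w`. -/
theorem statement_5 (ν : ℝ) (φ p : E4 → ℝ) (v : E4 → Fin 3 → ℝ)
    (hv : ContDiff ℝ (⊤ : ℕ∞) v) (hφ : ContDiff ℝ (⊤ : ℕ∞) φ) (hp : ContDiff ℝ (⊤ : ℕ∞) p)
    (hdiv : ∀ x, div4 v x = 0)
    (hNS : ∀ (x : E4) (i : Fin 3),
      pd4 3 (fun y => v y i) x - cross3 (v x) (curl4 v x) i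
        = ν * lap4 v x i
          - pd4 i.castSucc (fun y => p y + (1 / 2) * dot3 (v y) (v y)) x) :
    ∀ x : E4,
      (pd4 0 (thetaWedgeOmega ν φ p v 1 2 3) x
          - pd4 1 (thetaWedgeOmega ν φ p v 0 2 3) x
          + pd4 2 (thetaWedgeOmega ν φ p v 0 1 3) x
          - pd4 3 (thetaWedgeOmega ν φ p v 0 1 2) x
        = 2 * (OmegaNu ν φ v x 0 1 * OmegaNu ν φ v x 2 3
            - OmegaNu ν φ v x 0 2 * OmegaNu ν φ v x 1 3
            + OmegaNu ν φ v x 0 3 * OmegaNu ν φ v x 1 2))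
      ↔
      (pd4 3 (fun y => Hel v y) x
          + div4 (fun y i => Hel v y * v y i
              + (1 / 2) * (p y - (1 / 2) * dot3 (v y) (v y)) * curl4 v y i) x
        = (ν / 2) * dot3 (v x) (fun i => lap4 (fun y => curl4 v y) x i)
            - ν * Hw v x) := by
  intro x
  have hv0 : ContDiff ℝ (⊤ : ℕ∞) (fun z => v z 0) := contDiff_pi.mp hv 0
  have hv1 : ContDiff ℝ (⊤ : ℕ∞) (fun z => v z 1) := contDiff_pi.mp hv 1
  have hv2 : ContDiff ℝ (⊤ : ℕ∞) (fun z => v z 2) := contDiff_pi.mp hv 2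
  have dv0 : Differentiable ℝ (fun z => v z 0) := hv0.differentiable (by simp)
  have dv1 : Differentiable ℝ (fun z => v z 1) := hv1.differentiable (by simp)
  have dv2 : Differentiable ℝ (fun z => v z 2) := hv2.differentiable (by simp)
  have dφ : Differentiable ℝ φ := hφ.differentiable (by simp)
  have dp : Differentiable ℝ p := hp.differentiable (by simp)
  have key :
      pd4 0 (thetaWedgeOmega ν φ p v 1 2 3) x
          - pd4 1 (thetaWedgeOmega ν φ p v 0 2 3) x
          + pd4 2 (thetaWedgeOmega ν φ p v 0 1 3) x
          - pd4 3 (thetaWedgeOmega ν φ p v 0 1 2) x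
          - 2 * (OmegaNu ν φ v x 0 1 * OmegaNu ν φ v x 2 3
            - OmegaNu ν φ v x 0 2 * OmegaNu ν φ v x 1 3
            + OmegaNu ν φ v x 0 3 * OmegaNu ν φ v x 1 2)
        = (-2) * (pd4 3 (fun y => Hel v y) x
          + div4 (fun y i => Hel v y * v y i
              + (1 / 2) * (p y - (1 / 2) * dot3 (v y) (v y)) * curl4 v y i) x
          - ((ν / 2) * dot3 (v x) (fun i => lap4 (fun y => curl4 v y) x i)
            - ν * Hw v x)) := by
    delta thetaWedgeOmega
    delta OmegaNu thetaF
    delta aNu Hel Hw div4 lap4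
    delta curl4 grad4 dot3 cross3
    simp (disch := fun_prop) only [Fin.sum_univ_three, Matrix.cons_val_zero,
      Matrix.cons_val_one, Matrix.head_cons, Matrix.cons_val_two, Matrix.tail_cons,
      Matrix.cons_val_three, pd4_add, pd4_sub, pd4_neg, pd4_mul, pd4_const_mul, pd4_const]
    simp (disch := fun_prop) only [pd4_comm10, pd4_comm20, pd4_comm21, pd4_comm30,
      pd4_comm31, pd4_comm32, pd4_comm10', pd4_comm20', pd4_comm21', pd4_comm30',
      pd4_comm31', pd4_comm32']
    ring
  constructor <;> intro h <;> linarith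

end
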